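/- The circulant graph H_{2n,2n+3} (on vertices v_0,...,v_{2n+2}, with v_i ~ v_j iff i−n ≤ j ≤ i+n mod 2n+3, j ≠ i) is (2n² + 3n − 1, 1)-distance antimagic; in particular the labeling f(v_i) = 2n+3−i for 0 ≤ i ≤ n+1 and for i = 2n+2, and f(v_i) = i−n for n+2 ≤ i ≤ 2n+1, yields weights forming the set {2n²+3n−1, 2n²+3n, ..., 2n²+5n+1}. -/

import Mathlib

open scoped Classical
open Finset

/-- Weight of a vertex: sum of labels over its open neighborhood. -/
noncomputable def wsum {V : Type*} [Fintype V] (G : SimpleGraph V) (f : V → ℕ) (u : V) : ℕ :=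
  ∑ v ∈ Finset.univ.filter (fun v => G.Adj u v), f v

/-- A graph is distance magic if some bijective labeling by 1,...,n has constant weights. -/
def IsDistanceMagic {V : Type*} [Fintype V] (G : SimpleGraph V) : Prop :=
  ∃ (f : V ≃ Fin (Fintype.card V)) (c : ℕ),
    ∀ u, wsum G (fun v => (f v : ℕ) + 1) u = c

/-- `G` is `r`-regular. -/
def IsRegularDeg {V : Type*} [Fintype V] (G : SimpleGraph V) (r : ℕ) : Prop :=
  ∀ u : V, (Finset.univ.filter (fun v => G.Adj u v)).card = r

/-- `(a,d)`-distance antimagic: some bijective labeling by 1,...,n has weight set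
`{a, a+d, ..., a+(n-1)d}`. -/
def IsDistAntimagic {V : Type*} [Fintype V] (G : SimpleGraph V) (a d : ℕ) : Prop :=
  ∃ f : V ≃ Fin (Fintype.card V),
    Finset.image (fun u => wsum G (fun v => (f v : ℕ) + 1) u) Finset.univ
      = Finset.image (fun i : Fin (Fintype.card V) => a + (i : ℕ) * d) Finset.univ

/-- Circulant graph on `N` vertices with jumps `1,...,m` (so `H_{2m,N} = C_N^m`). -/
def circulant (N m : ℕ) : SimpleGraph (Fin N) :=
  SimpleGraph.fromRel (fun i j => ∃ k, 1 ≤ k ∧ k ≤ m ∧ ((i : ℕ) + k) % N = (j : ℕ))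

/-- The graph `(K_{n-1} - M) + K_1`: vertex `0` joined to all, and vertices `1,...,n-1`
forming a complete graph minus the perfect matching pairing `i` with `i + (n-1)/2 (mod n-1)`. -/
def calG (n : ℕ) : SimpleGraph (Fin n) :=
  SimpleGraph.fromRel (fun i j =>
    (i : ℕ) = 0 ∨ (j : ℕ) = 0 ∨
      ¬ (((i : ℕ) - 1 + (n - 1) / 2) % (n - 1) = (j : ℕ) - 1))

/-- Lexicographic product `G ∘ H`. -/
def lexProd {α β : Type*} (G : SimpleGraph α) (H : SimpleGraph β) : SimpleGraph (α × β) where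
  Adj x y := G.Adj x.1 y.1 ∨ (x.1 = y.1 ∧ H.Adj x.2 y.2)
  symm := by
    constructor
    rintro ⟨a, b⟩ ⟨c, d⟩ (h | ⟨h1, h2⟩)
    · exact Or.inl h.symm
    · exact Or.inr ⟨h1.symm, h2.symm⟩
  loopless := by
    constructor
    rintro ⟨a, b⟩ (h | ⟨-, h⟩)
    · exact G.irrefl h
    · exact H.irrefl h

/-- Direct (tensor) product `G × H`. -/
def tensorProd {α β : Type*} (G : SimpleGraph α) (H : SimpleGraph β) : SimpleGraph (α × β) where
  Adj x y := G.Adj x.1 y.1 ∧ H.Adj x.2 y.2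
  symm := ⟨fun _ _ h => ⟨h.1.symm, h.2.symm⟩⟩
  loopless := ⟨fun x h => G.irrefl h.1⟩

/-- The Harary graph `H_{3,n}`. -/
noncomputable def harary3 (n : ℕ) : SimpleGraph (Fin n) :=
  circulant n 1 ⊔ SimpleGraph.fromRel (fun i j =>
    if n % 2 = 0 then
      ∃ k, 1 ≤ k ∧ k ≤ n / 2 ∧ (i : ℕ) = k ∧ (j : ℕ) = (k + n / 2) % n
    else
      ((i : ℕ) = 0 ∧ ((j : ℕ) = (n - 1) / 2 ∨ (j : ℕ) = (n + 1) / 2)) ∨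
      (∃ k, 1 ≤ k ∧ k < (n - 1) / 2 ∧ (i : ℕ) = k ∧ (j : ℕ) = (k + (n + 1) / 2) % n))

/-- The Harary graph `H_{2n+1,2n+3}`: `C_{2n+3}^n` together with edges `v_0 v_{n+1}`,
`v_0 v_{n+2}` and `v_i v_{i+n+2}` for `1 ≤ i < n+1`. -/
def hararyOdd (n : ℕ) : SimpleGraph (Fin (2 * n + 3)) :=
  circulant (2 * n + 3) n ⊔ SimpleGraph.fromRel (fun i j =>
    ((i : ℕ) = 0 ∧ ((j : ℕ) = n + 1 ∨ (j : ℕ) = n + 2)) ∨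
    (∃ k, 1 ≤ k ∧ k < n + 1 ∧ (i : ℕ) = k ∧ (j : ℕ) = k + n + 2))

/-- The Harary graph `H_{4n+1,4n+4}`: circulant with jumps `1,...,2n` and `2n+2`. -/
def harary41 (n : ℕ) : SimpleGraph (Fin (4 * n + 4)) :=
  SimpleGraph.fromRel (fun i j =>
    ∃ k, ((1 ≤ k ∧ k ≤ 2 * n) ∨ k = 2 * n + 2) ∧ ((i : ℕ) + k) % (4 * n + 4) = (j : ℕ))

/-- The join `G + K_1`. -/
def joinK1 {V : Type*} (G : SimpleGraph V) : SimpleGraph (V ⊕ Unit) :=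
  SimpleGraph.fromRel (fun x y =>
    match x, y with
    | Sum.inl a, Sum.inl b => G.Adj a b
    | Sum.inl _, Sum.inr _ => True
    | Sum.inr _, _ => False)

/-! In `H_{2n,2n+3} = C_{2n+3}^n` the only vertices outside the open neighbourhood of `v_u` are
`v_u`, `v_{u+n+1}` and `v_{u+n+2}`, so the weight of `v_u` is the total label sum `(n+2)(2n+3)`
minus the labels of these three vertices. For the given labeling this triple sum takes every value
in `[2n+5, 4n+7]` exactly once, so the `2n+3` weights are distinct and fill
`[2n²+3n-1, 2n²+5n+1]`. -/

theorem image_univ_eq_Icc_of_injective {α : Type*} [Fintype α] {f : α → ℕ} {a b : ℕ}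
    (hf : Function.Injective f) (hmaps : ∀ x, f x ∈ Icc a b) (hcard : b + 1 - a ≤ Fintype.card α) :
    image f univ = Icc a b := by
  refine eq_of_subset_of_card_le (fun y hy => ?_) ?_
  · obtain ⟨x, -, rfl⟩ := mem_image.mp hy
    exact hmaps x
  · rwa [Nat.card_Icc, card_image_of_injective _ hf, card_univ]

theorem isDistAntimagic_of_injective {V : Type*} [Fintype V] [Nonempty V] (G : SimpleGraph V)
    {f : V → ℕ} (hf : Function.Injective f) (hrange : ∀ v, f v ∈ Icc 1 (Fintype.card V)) {a : ℕ}
    (h : image (wsum G f) univ = Icc a (a + Fintype.card V - 1)) :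
    IsDistAntimagic G a 1 := by
  have hcard := Fintype.card_pos (α := V)
  have hlt : ∀ v, f v - 1 < Fintype.card V := fun v => by have := mem_Icc.mp (hrange v); omega
  let g : V → Fin (Fintype.card V) := fun v => ⟨f v - 1, hlt v⟩
  have hg : Function.Injective g := fun v w hvw => hf <| by
    have := mem_Icc.mp (hrange v)
    have := mem_Icc.mp (hrange w)
    simp only [g, Fin.mk.injEq] at hvw
    omega
  let e := Equiv.ofBijective g
    ((Fintype.bijective_iff_injective_and_card g).mpr ⟨hg, (Fintype.card_fin _).symm⟩)
  have he : (fun v => (e v : ℕ) + 1) = f := funext fun v => by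
    have := mem_Icc.mp (hrange v)
    simp only [e, g, Equiv.ofBijective_apply]
    omega
  refine ⟨e, ?_⟩
  rw [he, h]
  refine (image_univ_eq_Icc_of_injective (fun i j hij => ?_) (fun i => ?_) ?_).symm
  · simpa [Fin.ext_iff] using hij
  · have := i.isLt
    simp only [mem_Icc]
    omega
  · simp only [Fintype.card_fin]
    omega

theorem wsum_add_sum_nonadj {V : Type*} [Fintype V] (G : SimpleGraph V) (f : V → ℕ) (u : V) :
    wsum G f u + ∑ v ∈ univ.filter (fun v => ¬ G.Adj u v), f v = ∑ v, f v :=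
  sum_filter_add_sum_filter_not _ _ _

theorem circulant_adj_iff {N m : ℕ} (hm : m < N) (u v : Fin N) :
    (circulant N m).Adj u v ↔ u ≠ v ∧
      ((u : ℕ) < v ∧ (v : ℕ) ≤ u + m ∨ (v : ℕ) < u ∧ (u : ℕ) ≤ v + m ∨
        (v : ℕ) + N ≤ u + m ∨ (u : ℕ) + N ≤ v + m) := by
  have hrel : ∀ i j : Fin N, (∃ k, 1 ≤ k ∧ k ≤ m ∧ ((i : ℕ) + k) % N = j) ↔
      ((i : ℕ) < j ∧ (j : ℕ) ≤ i + m ∨ (j : ℕ) + N ≤ i + m) := by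
    intro i j
    have hi := i.isLt
    have hj := j.isLt
    constructor
    · rintro ⟨k, hk1, hkm, hk⟩
      rcases lt_or_ge ((i : ℕ) + k) N with h | h
      · rw [Nat.mod_eq_of_lt h] at hk; omega
      · rw [Nat.mod_eq_sub_mod h, Nat.mod_eq_of_lt (by omega)] at hk; omega
    · rintro (h | h)
      · exact ⟨j - i, by omega, by omega, by rw [Nat.mod_eq_of_lt (by omega)]; omega⟩
      · refine ⟨j + N - i, by omega, by omega, ?_⟩
        rw [Nat.mod_eq_sub_mod (by omega), Nat.mod_eq_of_lt (by omega)]; omega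
  simp only [circulant, SimpleGraph.fromRel_adj, hrel]
  tauto

theorem circulant_not_adj_iff (m : ℕ) (u v : Fin (2 * m + 3)) :
    ¬ (circulant (2 * m + 3) m).Adj u v ↔
      v = u ∨ v = u + ⟨m + 1, by omega⟩ ∨ v = u + ⟨m + 2, by omega⟩ := by
  rw [circulant_adj_iff (by omega)]
  simp only [Fin.ext_iff, Fin.val_add_eq_ite]
  have := u.isLt
  have := v.isLt
  split_ifs <;> omega

theorem wsum_circulant_add_nonadj (m : ℕ) (f : Fin (2 * m + 3) → ℕ) (u : Fin (2 * m + 3)) :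
    wsum (circulant (2 * m + 3) m) f u
        + (f u + f (u + ⟨m + 1, by omega⟩) + f (u + ⟨m + 2, by omega⟩)) = ∑ v, f v := by
  have hu := u.isLt
  have hnonadj : univ.filter (fun v => ¬ (circulant (2 * m + 3) m).Adj u v)
      = {u, u + ⟨m + 1, by omega⟩, u + ⟨m + 2, by omega⟩} := by
    ext v
    simp only [mem_filter, mem_univ, true_and, mem_insert, mem_singleton, circulant_not_adj_iff]
  have hne₁ : u ∉ ({u + ⟨m + 1, by omega⟩, u + ⟨m + 2, by omega⟩} : Finset _) := by
    simp only [mem_insert, mem_singleton, Fin.ext_iff, Fin.val_add_eq_ite]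
    split_ifs <;> omega
  have hne₂ : u + ⟨m + 1, by omega⟩ ≠ u + ⟨m + 2, by omega⟩ := by
    simp only [ne_eq, Fin.ext_iff, Fin.val_add_eq_ite]
    split_ifs <;> omega
  rw [← wsum_add_sum_nonadj _ f u, hnonadj, sum_insert hne₁, sum_pair hne₂, add_assoc]

theorem sum_Icc_one_mul_two (N : ℕ) : (∑ k ∈ Icc 1 N, k) * 2 = N * (N + 1) := by
  induction N with
  | zero => simp
  | succ N ih => rw [sum_Icc_succ_top (by omega), add_mul, ih]; ring

def hararyLabel (n : ℕ) (i : Fin (2 * n + 3)) : ℕ :=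
  if (i : ℕ) ≤ n + 1 ∨ (i : ℕ) = 2 * n + 2 then 2 * n + 3 - (i : ℕ) else (i : ℕ) - n

theorem hararyLabel_mem_Icc (n : ℕ) (i : Fin (2 * n + 3)) :
    hararyLabel n i ∈ Icc 1 (2 * n + 3) := by
  have := i.isLt
  rw [mem_Icc, hararyLabel]
  split_ifs <;> omega

theorem hararyLabel_injective (n : ℕ) : Function.Injective (hararyLabel n) := by
  intro i j h
  have := i.isLt
  have := j.isLt
  simp only [hararyLabel] at h
  ext
  split_ifs at h <;> omega

theorem image_hararyLabel (n : ℕ) : image (hararyLabel n) univ = Icc 1 (2 * n + 3) :=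
  image_univ_eq_Icc_of_injective (hararyLabel_injective n) (hararyLabel_mem_Icc n) (by simp)

theorem bijOn_hararyLabel (n : ℕ) : Set.BijOn (hararyLabel n) Set.univ (Set.Icc 1 (2 * n + 3)) := by
  have h := (hararyLabel_injective n).injOn (s := Set.univ) |>.bijOn_image
  rwa [← coe_univ, ← coe_image, image_hararyLabel, coe_Icc, coe_univ] at h

theorem sum_hararyLabel (n : ℕ) : ∑ i, hararyLabel n i = (n + 2) * (2 * n + 3) := by
  have h := sum_Icc_one_mul_two (2 * n + 3)
  rw [← image_hararyLabel n, sum_image fun i _ j _ hij => hararyLabel_injective n hij] at h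
  nlinarith

/-- The label sum over the closed non-neighbourhood `{v_u, v_{u+n+1}, v_{u+n+2}}` of `v_u`,
evaluated region by region (see `hararyLabel_add_nonadj`). -/
def nonadjLabelSum (n u : ℕ) : ℕ :=
  if u = 0 then 3 * n + 7
  else if u < n then 2 * n + 6 + u
  else if u = n then 2 * n + 5
  else if u = n + 1 then 3 * n + 6
  else if u < 2 * n + 2 then 5 * n + 9 - u
  else 2 * n + 6

theorem hararyLabel_add_nonadj {n : ℕ} (hn : 1 ≤ n) (u : Fin (2 * n + 3)) :
    hararyLabel n u + hararyLabel n (u + ⟨n + 1, by omega⟩) + hararyLabel n (u + ⟨n + 2, by omega⟩)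
      = nonadjLabelSum n u := by
  have hu := u.isLt
  obtain h | h | h | h | h | h : (u : ℕ) = 0 ∨ ((u : ℕ) ≠ 0 ∧ (u : ℕ) < n) ∨ (u : ℕ) = n ∨
      (u : ℕ) = n + 1 ∨ (n + 2 ≤ (u : ℕ) ∧ (u : ℕ) < 2 * n + 2) ∨ (u : ℕ) = 2 * n + 2 := by omega
  all_goals
    simp (disch := omega) only [hararyLabel, nonadjLabelSum, Fin.val_add_eq_ite, if_pos, if_neg]
    omega

theorem nonadjLabelSum_mem_Icc (n : ℕ) {u : ℕ} (hu : u < 2 * n + 3) :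
    nonadjLabelSum n u ∈ Icc (2 * n + 5) (4 * n + 7) := by
  rw [mem_Icc, nonadjLabelSum]
  split_ifs <;> omega

theorem nonadjLabelSum_injOn {n : ℕ} (hn : 1 ≤ n) :
    Set.InjOn (nonadjLabelSum n) (Set.Iio (2 * n + 3)) := by
  intro u hu v hv h
  simp only [Set.mem_Iio] at hu hv
  simp only [nonadjLabelSum] at h
  split_ifs at h <;> omega

theorem image_wsum_hararyLabel {n : ℕ} (hn : 1 ≤ n) :
    image (wsum (circulant (2 * n + 3) n) (hararyLabel n)) univ
      = Icc (2 * n ^ 2 + 3 * n - 1) (2 * n ^ 2 + 5 * n + 1) := by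
  have hw : ∀ u, wsum (circulant (2 * n + 3) n) (hararyLabel n) u + nonadjLabelSum n u
      = 2 * n ^ 2 + 7 * n + 6 := fun u => by
    rw [← hararyLabel_add_nonadj hn, wsum_circulant_add_nonadj, sum_hararyLabel]; ring
  refine image_univ_eq_Icc_of_injective (fun u v huv => ?_) (fun u => ?_) ?_
  · have := hw u
    have := hw v
    exact Fin.ext (nonadjLabelSum_injOn hn u.isLt v.isLt (by omega))
  · have := hw u
    have := mem_Icc.mp (nonadjLabelSum_mem_Icc n u.isLt)
    rw [mem_Icc]
    omega
  · simp only [Fintype.card_fin]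
    omega

/-- H_{2n,2n+3} is (2n^2+3n-1, 1)-distance antimagic, witnessed by the
stated labeling whose weights form {2n^2+3n-1, ..., 2n^2+5n+1}. -/
theorem harary_2n_2n3_antimagic (n : ℕ) (hn : 1 ≤ n) :
    IsDistAntimagic (circulant (2 * n + 3) n) (2 * n ^ 2 + 3 * n - 1) 1 ∧
    Set.BijOn (fun i : Fin (2 * n + 3) =>
        if (i : ℕ) ≤ n + 1 ∨ (i : ℕ) = 2 * n + 2 then 2 * n + 3 - (i : ℕ) else (i : ℕ) - n)
      Set.univ (Set.Icc 1 (2 * n + 3)) ∧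
    Finset.image (wsum (circulant (2 * n + 3) n)
        (fun i => if (i : ℕ) ≤ n + 1 ∨ (i : ℕ) = 2 * n + 2 then 2 * n + 3 - (i : ℕ)
                  else (i : ℕ) - n)) Finset.univ
      = Finset.Icc (2 * n ^ 2 + 3 * n - 1) (2 * n ^ 2 + 5 * n + 1) := by
  have hweights := image_wsum_hararyLabel hn
  refine ⟨isDistAntimagic_of_injective _ (hararyLabel_injective n) ?_ ?_,
    bijOn_hararyLabel n, hweights⟩
  · simpa only [Fintype.card_fin] using hararyLabel_mem_Icc n
  · rw [hweights, Fintype.card_fin]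
    congr 1
    omega
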